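/- arXiv:1109.2409 — 3 statements merged into one kernel-verified Lean document; each statement's English description precedes it below -/
import Mathlib

section
/- Fix $\tau \in S_{2n}$ and a positive integer $N$. Let $A(\tau,N)$ be the set of pairs $(\mathbf{k},\mathbf{l}) \in [N]^n \times [N]^n$ such that $\tilde{\mathbf{l}} = (\tilde{\mathbf{k}})^\tau$, where $\tilde{\mathbf{k}} = (k_1,k_1,k_2,k_2,\dots,k_n,k_n)$, $\tilde{\mathbf{l}} = (l_1,l_1,\dots,l_n,l_n)$, and $\mathbf{i}^\tau$ denotes $(i_{\tau(1)},\dots,i_{\tau(2n)})$. Then $|A(\tau,N)| = N^{\ell'(\tau)}$, where $\ell'(\tau)$ is the number of connected components of the graph $\Gamma(\tau)$. -/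
open scoped Classical

noncomputable section

/-- The vertex `2k-1` (0-indexed: `2k`). -/
def lo (n : ℕ) (k : Fin n) : Fin (2*n) := ⟨2*k.1, by have := k.2; omega⟩
/-- The vertex `2k` (0-indexed: `2k+1`). -/
def hi (n : ℕ) (k : Fin n) : Fin (2*n) := ⟨2*k.1+1, by have := k.2; omega⟩

/-- The hyperoctahedral group `H_n ⊆ S_{2n}`, generated by the transpositions
`(2k-1, 2k)` and the double transpositions `(2i-1, 2j-1)(2i, 2j)` for `i < j`. -/
def hyperoctahedral (n : ℕ) : Subgroup (Equiv.Perm (Fin (2*n))) :=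
  Subgroup.closure
    ({g | ∃ k : Fin n, g = Equiv.swap (lo n k) (hi n k)} ∪
     {g | ∃ i j : Fin n, i < j ∧
        g = Equiv.swap (lo n i) (lo n j) * Equiv.swap (hi n i) (hi n j)})

/-- The graph `Γ(σ)` on vertices `1, …, 2n` with edges `{2k-1, 2k}` and
`{σ(2k-1), σ(2k)}` for `k = 1, …, n`. -/
def pairGraph (n : ℕ) (σ : Equiv.Perm (Fin (2*n))) : SimpleGraph (Fin (2*n)) :=
  SimpleGraph.fromRel (fun x y => ∃ k : Fin n,
    (x = lo n k ∧ y = hi n k) ∨ (x = σ (lo n k) ∧ y = σ (hi n k)))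

/-- `ℓ′(σ)`, the number of connected components of `Γ(σ)`. -/
def compCount (n : ℕ) (σ : Equiv.Perm (Fin (2*n))) : ℕ :=
  Nat.card (pairGraph n σ).ConnectedComponent

/-- The coset-type of `σ ∈ S_{2n}`: the multiset of half the sizes of the
connected components of `Γ(σ)`; it is a partition of `n`. -/
def cosetType (n : ℕ) (σ : Equiv.Perm (Fin (2*n))) : Multiset ℕ :=
  haveI : Fintype (pairGraph n σ).ConnectedComponent := Fintype.ofFinite _
  (Finset.univ : Finset (pairGraph n σ).ConnectedComponent).val.map
    (fun c => c.supp.ncard / 2)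

/-- `k̃ = (k_1, k_1, k_2, k_2, …, k_n, k_n)`. -/
def tilde (N n : ℕ) (k : Fin n → Fin N) : Fin (2*n) → Fin N :=
  fun x => k ⟨x.1 / 2, by have := x.2; omega⟩

/-!
For `(k, l) ∈ A(τ, N)` the colouring `k̃` is constant along both kinds of edges of `Γ(τ)`:
along `{2j-1, 2j}` by construction, and along `{τ(2j-1), τ(2j)}` because `k̃ ∘ τ = l̃` agrees
at `2j-1` and `2j`. Conversely such a colouring `f` comes from exactly one pair, namely
`k_j = f(2j-1)`, `l_j = f(τ(2j-1))`. So `A(τ, N)` is in bijection with the colourings of the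
vertices constant on connected components of `Γ(τ)`, i.e. with maps from the components to `[N]`.
-/

namespace SimpleGraph

variable {V β : Type*} {G : SimpleGraph V}

theorem Reachable.eq_of_forall_adj_eq {f : V → β} (hf : ∀ x y, G.Adj x y → f x = f y)
    {x y : V} (h : G.Reachable x y) : f x = f y := by
  obtain ⟨p⟩ := h
  induction p with
  | nil => rfl
  | cons ha _ ih => exact (hf _ _ ha).trans ih

variable (G) in
def adjInvariantEquiv :
    {f : V → β // ∀ x y, G.Adj x y → f x = f y} ≃ (G.ConnectedComponent → β) where
  toFun f := ConnectedComponent.lift f.1 fun _ _ p _ => p.reachable.eq_of_forall_adj_eq f.2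
  invFun F := ⟨F ∘ G.connectedComponentMk, fun _ _ h =>
    congrArg F (ConnectedComponent.connectedComponentMk_eq_of_adj h)⟩
  left_inv _ := rfl
  right_inv _ := funext <| ConnectedComponent.ind fun _ => rfl

end SimpleGraph

def half {n : ℕ} (x : Fin (2*n)) : Fin n := ⟨x.1 / 2, by have := x.2; omega⟩

theorem tilde_apply (N n : ℕ) (k : Fin n → Fin N) (x : Fin (2*n)) :
    tilde N n k x = k (half x) := rfl

theorem half_lo (n : ℕ) (j : Fin n) : half (lo n j) = j := by
  ext; simp only [half, lo]; omega

theorem half_hi (n : ℕ) (j : Fin n) : half (hi n j) = j := by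
  ext; simp only [half, hi]; omega

theorem lo_ne_hi (n : ℕ) (j : Fin n) : lo n j ≠ hi n j := by
  simp [lo, hi, Fin.ext_iff]

theorem lo_half_or_hi_half {n : ℕ} (x : Fin (2*n)) : x = lo n (half x) ∨ x = hi n (half x) := by
  simp only [lo, hi, half, Fin.ext_iff]
  omega

theorem apply_lo_half {n : ℕ} {α : Type*} {g : Fin (2*n) → α}
    (hg : ∀ j, g (lo n j) = g (hi n j)) (x : Fin (2*n)) : g (lo n (half x)) = g x := by
  rcases lo_half_or_hi_half x with hx | hx
  · rw [← hx]
  · rw [hg, ← hx]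

theorem tilde_lo_eq_tilde_hi (N n : ℕ) (k : Fin n → Fin N) (j : Fin n) :
    tilde N n k (lo n j) = tilde N n k (hi n j) := by
  rw [tilde_apply, tilde_apply, half_lo, half_hi]

theorem pairGraph_adj_lo_hi (n : ℕ) (τ : Equiv.Perm (Fin (2*n))) (j : Fin n) :
    (pairGraph n τ).Adj (lo n j) (hi n j) :=
  (SimpleGraph.fromRel_adj _ _ _).2 ⟨lo_ne_hi n j, Or.inl ⟨j, Or.inl ⟨rfl, rfl⟩⟩⟩

theorem pairGraph_adj_apply_lo_hi (n : ℕ) (τ : Equiv.Perm (Fin (2*n))) (j : Fin n) :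
    (pairGraph n τ).Adj (τ (lo n j)) (τ (hi n j)) :=
  (SimpleGraph.fromRel_adj _ _ _).2
    ⟨τ.injective.ne (lo_ne_hi n j), Or.inl ⟨j, Or.inr ⟨rfl, rfl⟩⟩⟩

theorem tilde_eq_of_pairGraph_adj {n N : ℕ} {τ : Equiv.Perm (Fin (2*n))}
    {k l : Fin n → Fin N} (hkl : tilde N n l = fun x => tilde N n k (τ x))
    {x y : Fin (2*n)} (h : (pairGraph n τ).Adj x y) : tilde N n k x = tilde N n k y := by
  have hedge : ∀ x y, (∃ j : Fin n, (x = lo n j ∧ y = hi n j) ∨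
      (x = τ (lo n j) ∧ y = τ (hi n j))) → tilde N n k x = tilde N n k y := by
    rintro _ _ ⟨j, ⟨rfl, rfl⟩ | ⟨rfl, rfl⟩⟩
    · exact tilde_lo_eq_tilde_hi N n k j
    · calc tilde N n k (τ (lo n j)) = tilde N n l (lo n j) := (congrFun hkl _).symm
        _ = tilde N n l (hi n j) := tilde_lo_eq_tilde_hi N n l j
        _ = tilde N n k (τ (hi n j)) := congrFun hkl _
  obtain ⟨-, hxy | hyx⟩ := (SimpleGraph.fromRel_adj _ _ _).1 h
  exacts [hedge _ _ hxy, (hedge _ _ hyx).symm]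

def pairSolutionsEquiv (n N : ℕ) (τ : Equiv.Perm (Fin (2*n))) :
    {p : (Fin n → Fin N) × (Fin n → Fin N) // tilde N n p.2 = fun x => tilde N n p.1 (τ x)} ≃
      {f : Fin (2*n) → Fin N // ∀ x y, (pairGraph n τ).Adj x y → f x = f y} where
  toFun p := ⟨tilde N n p.1.1, fun _ _ => tilde_eq_of_pairGraph_adj p.2⟩
  invFun f := ⟨(fun j => f.1 (lo n j), fun j => f.1 (τ (lo n j))), by
    have hf := fun j => f.2 _ _ (pairGraph_adj_lo_hi n τ j)
    have hfτ := fun j => f.2 _ _ (pairGraph_adj_apply_lo_hi n τ j)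
    funext x
    exact (apply_lo_half (g := f.1 ∘ τ) hfτ x).trans (apply_lo_half hf (τ x)).symm⟩
  left_inv := by
    rintro ⟨⟨k, l⟩, hkl⟩
    ext j : 3
    · exact congrArg k (half_lo n j)
    · exact (congrFun hkl (lo n j)).symm.trans (congrArg l (half_lo n j))
  right_inv f := Subtype.ext <| funext <|
    apply_lo_half fun j => f.2 _ _ (pairGraph_adj_lo_hi n τ j)

theorem stmt4_general (n N : ℕ) (τ : Equiv.Perm (Fin (2*n))) :
    Nat.card {p : (Fin n → Fin N) × (Fin n → Fin N) //
        tilde N n p.2 = fun x => tilde N n p.1 (τ x)} = N ^ compCount n τ := by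
  rw [Nat.card_congr ((pairSolutionsEquiv n N τ).trans (pairGraph n τ).adjInvariantEquiv),
    Nat.card_fun, Nat.card_fin, compCount]

/-- `|A(τ, N)| = N^{ℓ′(τ)}`. -/
theorem stmt4 (n N : ℕ) (hN : 0 < N) (τ : Equiv.Perm (Fin (2*n))) :
    Nat.card {p : (Fin n → Fin N) × (Fin n → Fin N) //
        tilde N n p.2 = fun x => tilde N n p.1 (τ x)} = N ^ compCount n τ :=
  stmt4_general n N τ
end
end

section
/- For any $n \ge 1$ and any complex number $z$ not in $\{0,-2,-4,\dots,-2(n-1)\}$, the sum of the orthogonal Weingarten function over all of $S_{2n}$ equals $\sum_{\sigma \in S_{2n}} \mathrm{Wg}^O_n(\sigma;z) = \frac{2^n n!}{z(z+2)(z+4)\cdots(z+2(n-1))}$. -/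
open scoped Classical

noncomputable section

/-- The value at `π` of the permutation character of `S_n` acting on ordered set
partitions of `[n]` with block sizes `c = (c_1, …, c_l)` (the character induced from
the trivial character of the Young subgroup `S_c`); `0` if `c` is not a composition
of `n` into nonnegative parts. -/
def youngChar (n l : ℕ) (c : Fin l → ℤ) (π : Equiv.Perm (Fin n)) : ℤ :=
  ((Finset.univ.filter (fun f : Fin n → Fin l =>
     (∀ i, ((Finset.univ.filter fun x => f x = i).card : ℤ) = c i) ∧
     ∀ x, f (π x) = f x)).card : ℤ)

/-- The parts of the partition `μ` listed in weakly decreasing order. -/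
def sortedParts {n : ℕ} (μ : Nat.Partition n) : List ℕ :=
  (Multiset.sort μ.parts (· ≤ ·)).reverse

/-- The irreducible character `χ^μ` of `S_n` associated with the partition `μ ⊢ n`,
via the determinantal (Jacobi–Trudi) formula
`χ^μ = det(η^{μ_i - i + j})_{1 ≤ i,j ≤ ℓ(μ)}` in terms of the permutation characters
`η^c = youngChar`. -/
def charOfPartition {n : ℕ} (μ : Nat.Partition n) (π : Equiv.Perm (Fin n)) : ℤ :=
  ∑ w : Equiv.Perm (Fin (sortedParts μ).length),
    (Equiv.Perm.sign w : ℤ) *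
      youngChar n (sortedParts μ).length
        (fun i => ((sortedParts μ).get i : ℤ) + ((w i).1 : ℤ) - (i.1 : ℤ)) π

/-- The partition `2μ = (2μ_1, 2μ_2, …)` of `2n`. -/
def doublePartition {n : ℕ} (μ : Nat.Partition n) : Nat.Partition (2*n) where
  parts := μ.parts.map (fun r => 2*r)
  parts_pos := by
    intro i hi
    rcases Multiset.mem_map.mp hi with ⟨r, hr, rfl⟩
    have := μ.parts_pos hr; omega
  parts_sum := by
    have h : (μ.parts.map (fun r => 2*r)).sum = 2 * μ.parts.sum := by
      simpa using (Multiset.sum_map_mul_left (a := 2) (f := id) (s := μ.parts))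
    rw [h, μ.parts_sum]

/-- Convolution of two functions on a symmetric group:
`(f₁ * f₂)(σ) = ∑_τ f₁(στ⁻¹) f₂(τ)`. -/
def conv {n : ℕ} (f g : Equiv.Perm (Fin n) → ℂ) : Equiv.Perm (Fin n) → ℂ :=
  fun σ => ∑ τ : Equiv.Perm (Fin n), f (σ * τ⁻¹) * g τ

/-- `e_{H_n}`: the normalized indicator function of the hyperoctahedral group. -/
def eH (n : ℕ) : Equiv.Perm (Fin (2*n)) → ℂ :=
  fun σ => if σ ∈ hyperoctahedral n then ((2^n * n.factorial : ℂ))⁻¹ else 0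

/-- The zonal spherical function `ω^λ = χ^{2λ} * e_{H_n}` of the Gelfand pair
`(S_{2n}, H_n)`. -/
def omegaSph {n : ℕ} (lam : Nat.Partition n) : Equiv.Perm (Fin (2*n)) → ℂ :=
  conv (fun σ => (charOfPartition (doublePartition lam) σ : ℂ)) (eH n)

/-- `C′_λ(z) = ∏_{(i,j) ∈ λ} (z + 2j - i - 1)` (with `1`-based coordinates). -/
def Cprime {n : ℕ} (lam : Nat.Partition n) (z : ℂ) : ℂ :=
  ∏ i ∈ Finset.range (sortedParts lam).length,
    ∏ j ∈ Finset.range ((sortedParts lam).getD i 0), (z + 2*(j:ℂ) - (i:ℂ))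

/-- The orthogonal Weingarten function
`Wg^O_n(σ; z) = (2^n n!/(2n)!) ∑_{λ ⊢ n} (f^{2λ}/C′_λ(z)) ω^λ(σ)`. -/
def WgO (n : ℕ) (z : ℂ) (σ : Equiv.Perm (Fin (2*n))) : ℂ :=
  (2^n * n.factorial : ℂ) / ((2*n).factorial : ℂ) *
    ∑ lam : Nat.Partition n,
      (charOfPartition (doublePartition lam) 1 : ℂ) / Cprime lam z * omegaSph lam σ

/-!
Summing over `σ` splits each zonal spherical function as
`∑_σ ω^λ(σ) = (∑_ρ χ^{2λ}(ρ)) · ∑_τ e_{H_n}(τ)`, and the second factor is `1` because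
`|H_n| = 2^n n!`: `H_n` is the image of the signed permutations of the `n` pairs.
In the Jacobi–Trudi expansion `χ^μ = ∑_w sgn(w) η^{(μ_i - i + w(i))_i}`, a Young permutation
character `η^c` sums over `S_m` to `m!` when `c ≥ 0` (the action on ordered set partitions of
type `c` is transitive, so Burnside's lemma counts a single orbit) and to `0` otherwise. Hence
`∑_ρ χ^μ(ρ) = m! · det[0 ≤ μ_i - i + j]`, and this determinant vanishes once `μ` has two rows,
its first two columns being all ones. Only `λ = (n)` survives, with `χ^{(2n)} ≡ 1` and
`C'_{(n)}(z) = z(z+2)⋯(z+2n-2)`.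
-/

open Finset MulAction

theorem MulAction.sum_card_fixed_mem_orbit {G X : Type*} [Group G] [Fintype G] [MulAction G X]
    [Fintype X] (x : X) :
    ∑ g : G, #{y ∈ (orbit G x).toFinset | g • y = y} = Fintype.card G := by
  set O := (orbit G x).toFinset
  have hstab : ∀ y ∈ O, #O * #{g : G | g • y = y} = Fintype.card G := by
    intro y hy
    rw [Set.mem_toFinset, ← orbit_eq_iff] at hy
    rw [← card_orbit_mul_card_stabilizer_eq_card_group G y, hy, Set.toFinset_card]
    congr 1
    exact (Fintype.card_subtype _).symm
  have hpos : 0 < #O := card_pos.mpr ⟨x, by simp [O]⟩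
  apply Nat.eq_of_mul_eq_mul_left hpos
  calc #O * ∑ g : G, #{y ∈ O | g • y = y}
      = ∑ y ∈ O, #O * #{g : G | g • y = y} := by
        simp only [card_filter]; rw [Finset.sum_comm, Finset.mul_sum]
    _ = #O * Fintype.card G := by rw [sum_congr rfl hstab, sum_const, smul_eq_mul]

section FiberCounting

variable {α β : Type*} [Fintype α] [DecidableEq β]

theorem card_fiber_comp_perm (f : α → β) (σ : Equiv.Perm α) (i : β) :
    #{x | f (σ x) = i} = #{x | f x = i} :=
  card_bij' (fun x _ => σ x) (fun x _ => σ.symm x) (by simp) (by simp) (by simp) (by simp)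

theorem exists_perm_comp_eq_of_card_fiber_eq {f g : α → β}
    (h : ∀ i, #{x | f x = i} = #{x | g x = i}) : ∃ σ : Equiv.Perm α, f ∘ σ = g := by
  have e : ∀ i, {x // g x = i} ≃ {x // f x = i} := fun i =>
    Fintype.equivOfCardEq (by simp only [Fintype.card_subtype, h])
  exact ⟨Equiv.ofFiberEquiv e, funext (Equiv.ofFiberEquiv_map e)⟩

theorem exists_card_fiber_eq [Fintype β] (d : β → ℕ) (hd : ∑ i, d i = Fintype.card α) :
    ∃ f : α → β, ∀ i, #{x | f x = i} = d i := by
  obtain ⟨e⟩ : Nonempty (α ≃ Σ i, Fin (d i)) := Fintype.card_eq.mp (by simp [hd])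
  refine ⟨fun x => (e x).1, fun i => ?_⟩
  rw [← Fintype.card_subtype, Fintype.card_congr ((e.subtypeEquivOfSubtype).trans
    (Equiv.sigmaSubtype i)), Fintype.card_fin]

attribute [local instance] arrowAction

omit [Fintype α] [DecidableEq β] in
theorem arrowAction_perm_smul_apply (σ : Equiv.Perm α) (f : α → β) (x : α) :
    (σ • f) x = f (σ⁻¹ x) :=
  rfl

theorem mem_orbit_arrowAction_iff {f g : α → β} :
    g ∈ orbit (Equiv.Perm α) f ↔ ∀ i, #{x | g x = i} = #{x | f x = i} := by
  constructor
  · rintro ⟨σ, rfl⟩ i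
    exact card_fiber_comp_perm f σ⁻¹ i
  · intro h
    obtain ⟨σ, hσ⟩ := exists_perm_comp_eq_of_card_fiber_eq fun i => (h i).symm
    exact ⟨σ⁻¹, by ext; simp [← hσ, arrowAction_perm_smul_apply]⟩

omit [Fintype α] [DecidableEq β] in
theorem arrowAction_perm_smul_eq_self_iff (σ : Equiv.Perm α) (f : α → β) :
    σ • f = f ↔ ∀ x, f (σ x) = f x := by
  rw [funext_iff]
  simp only [arrowAction_perm_smul_apply]
  exact ⟨fun h x => by simpa using (h (σ x)).symm, fun h x => by simpa using (h (σ⁻¹ x)).symm⟩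

theorem sum_card_perm_invariant_of_card_fiber_eq [Fintype β] (f₀ : α → β) :
    ∑ σ : Equiv.Perm α, #{f : α → β | (∀ i, #{x | f x = i} = #{x | f₀ x = i}) ∧
      ∀ x, f (σ x) = f x} = (Fintype.card α).factorial := by
  rw [← Fintype.card_perm, ← sum_card_fixed_mem_orbit (G := Equiv.Perm α) f₀]
  refine sum_congr rfl fun σ _ => congrArg card ?_
  ext f
  simp only [mem_filter, mem_univ, true_and, Set.mem_toFinset, mem_orbit_arrowAction_iff,
    arrowAction_perm_smul_eq_self_iff]

end FiberCounting

theorem sum_youngChar (m l : ℕ) (c : Fin l → ℤ) (hc : ∑ i, c i = m) :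
    ∑ π : Equiv.Perm (Fin m), youngChar m l c π =
      if ∀ i, 0 ≤ c i then (m.factorial : ℤ) else 0 := by
  split_ifs with hpos
  · obtain ⟨f₀, hf₀⟩ := exists_card_fiber_eq (α := Fin m) (fun i => (c i).toNat) (by
      rw [Fintype.card_fin, ← Nat.cast_inj (R := ℤ), Nat.cast_sum, ← hc]
      exact sum_congr rfl fun i _ => Int.toNat_of_nonneg (hpos i))
    have hfiber : ∀ (f : Fin m → Fin l) i,
        (#{x | f x = i} : ℤ) = c i ↔ #{x | f x = i} = #{x | f₀ x = i} := by
      intro f i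
      have := hpos i
      rw [hf₀]
      omega
    simp only [youngChar, hfiber]
    rw [← Nat.cast_sum, Nat.cast_inj]
    convert sum_card_perm_invariant_of_card_fiber_eq f₀
    rw [Fintype.card_fin]
  · push Not at hpos
    obtain ⟨i, hi⟩ := hpos
    refine sum_eq_zero fun π _ => ?_
    rw [youngChar, Nat.cast_eq_zero, card_eq_zero, filter_eq_empty_iff]
    exact fun f _ hf => hi.not_ge (hf.1 i ▸ Int.natCast_nonneg _)

section Characters

variable {m : ℕ}

theorem pos_of_mem_sortedParts (μ : Nat.Partition m) {a : ℕ} (ha : a ∈ sortedParts μ) : 0 < a :=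
  μ.parts_pos (by simpa [sortedParts] using ha)

theorem sum_sortedParts (μ : Nat.Partition m) : (sortedParts μ).sum = m := by
  rw [sortedParts, List.sum_reverse, ← Multiset.sum_coe, Multiset.sort_eq, μ.parts_sum]

theorem length_sortedParts (μ : Nat.Partition m) :
    (sortedParts μ).length = Multiset.card μ.parts := by
  simp [sortedParts]

theorem sum_charOfPartition_eq_factorial_mul_det (μ : Nat.Partition m) :
    ∑ π, charOfPartition μ π = m.factorial * (Matrix.of fun j i : Fin (sortedParts μ).length =>
      if 0 ≤ ((sortedParts μ).get i : ℤ) + j - i then (1 : ℤ) else 0).det := by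
  have hsum : ∀ w : Equiv.Perm (Fin (sortedParts μ).length),
      ∑ i, (((sortedParts μ).get i : ℤ) + (w i : ℕ) - (i : ℕ)) = m := by
    intro w
    rw [sum_sub_distrib, sum_add_distrib, Equiv.sum_comp w (fun j => ((j : ℕ) : ℤ)),
      add_sub_cancel_right, ← Nat.cast_sum]
    simp only [List.get_eq_getElem, Fin.sum_univ_getElem, sum_sortedParts]
  simp only [charOfPartition, Matrix.det_apply, Matrix.of_apply, Fintype.prod_boole]
  rw [sum_comm, mul_sum]
  refine sum_congr rfl fun w _ => ?_
  rw [← mul_sum, sum_youngChar _ _ _ (hsum w)]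
  split_ifs <;> simp [Units.smul_def, mul_comm]

theorem sum_charOfPartition_eq_zero (μ : Nat.Partition m) (hμ : 2 ≤ (sortedParts μ).length) :
    ∑ π, charOfPartition μ π = 0 := by
  let i₀ : Fin (sortedParts μ).length := ⟨0, by omega⟩
  let i₁ : Fin (sortedParts μ).length := ⟨1, hμ⟩
  rw [sum_charOfPartition_eq_factorial_mul_det, Matrix.det_zero_of_column_eq
    (i := i₀) (j := i₁) (by simp [i₀, i₁, Fin.ext_iff]) fun k => ?_, mul_zero]
  have h₀ := pos_of_mem_sortedParts μ (List.get_mem _ i₀)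
  have h₁ := pos_of_mem_sortedParts μ (List.get_mem _ i₁)
  have hi₀ : (i₀ : ℕ) = 0 := rfl
  have hi₁ : (i₁ : ℕ) = 1 := rfl
  simp only [Matrix.of_apply]
  rw [if_pos (by omega), if_pos (by omega)]

theorem charOfPartition_eq_one (μ : Nat.Partition m) (hμ : (sortedParts μ).length ≤ 1)
    (π : Equiv.Perm (Fin m)) : charOfPartition μ π = 1 := by
  have : Subsingleton (Fin (sortedParts μ).length) := Fin.subsingleton_iff_le_one.mpr hμ
  obtain ⟨f, hf⟩ := exists_card_fiber_eq (α := Fin m) (fun i => (sortedParts μ).get i) (by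
    simp only [List.get_eq_getElem, Fin.sum_univ_getElem, sum_sortedParts, Fintype.card_fin])
  rw [charOfPartition, Fintype.sum_subsingleton _ 1, Equiv.Perm.sign_one, Units.val_one, one_mul,
    youngChar, Nat.cast_eq_one]
  refine le_antisymm (card_le_one_of_subsingleton _) (card_pos.mpr ⟨f, ?_⟩)
  simpa [hf] using fun x => Subsingleton.elim (f (π x)) (f x)

end Characters

namespace Hyperoctahedral

variable {n : ℕ}

def pairEquiv (n : ℕ) : Fin n × Fin 2 ≃ Fin (2 * n) :=
  finProdFinEquiv.trans (finCongr (Nat.mul_comm n 2))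

theorem pairEquiv_zero (k : Fin n) : pairEquiv n (k, 0) = lo n k := by
  ext; simp [pairEquiv, lo, mul_comm]

theorem pairEquiv_one (k : Fin n) : pairEquiv n (k, 1) = hi n k := by
  ext; simp [pairEquiv, hi]; omega

theorem perm_ext_pairEquiv {g h : Equiv.Perm (Fin (2 * n))}
    (H : ∀ k b, g (pairEquiv n (k, b)) = h (pairEquiv n (k, b))) : g = h :=
  Equiv.ext fun x => by simpa using H ((pairEquiv n).symm x).1 ((pairEquiv n).symm x).2

def signedPerm (π : Equiv.Perm (Fin n)) (s : Fin n → Fin 2) : Equiv.Perm (Fin (2 * n)) :=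
  (pairEquiv n).permCongr (Equiv.prodShear π fun k => Equiv.addRight (s k))

@[simp]
theorem signedPerm_pairEquiv (π : Equiv.Perm (Fin n)) (s : Fin n → Fin 2) (k : Fin n) (b : Fin 2) :
    signedPerm π s (pairEquiv n (k, b)) = pairEquiv n (π k, b + s k) := by
  simp [signedPerm, Equiv.permCongr_apply, Equiv.prodShear]

theorem signedPerm_mul (π ρ : Equiv.Perm (Fin n)) (s t : Fin n → Fin 2) :
    signedPerm π s * signedPerm ρ t = signedPerm (π * ρ) (t + s ∘ ρ) :=
  perm_ext_pairEquiv fun k b => by simp [add_assoc]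

theorem signedPerm_one_zero : signedPerm (1 : Equiv.Perm (Fin n)) 0 = 1 :=
  perm_ext_pairEquiv fun k b => by simp

theorem signedPerm_inv (π : Equiv.Perm (Fin n)) (s : Fin n → Fin 2) :
    (signedPerm π s)⁻¹ = signedPerm π⁻¹ (-(s ∘ ⇑π⁻¹)) := by
  rw [inv_eq_iff_mul_eq_one, signedPerm_mul, mul_inv_cancel, neg_add_cancel, signedPerm_one_zero]

theorem signedPerm_injective :
    Function.Injective fun p : Equiv.Perm (Fin n) × (Fin n → Fin 2) => signedPerm p.1 p.2 := by
  rintro ⟨π, s⟩ ⟨ρ, t⟩ h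
  have H k : π k = ρ k ∧ s k = t k := by
    simpa using congrArg (fun g : Equiv.Perm _ => g (pairEquiv n (k, 0))) h
  simp only [Prod.mk.injEq]
  exact ⟨Equiv.ext fun k => (H k).1, funext fun k => (H k).2⟩

theorem swap_lo_hi (k : Fin n) :
    Equiv.swap (lo n k) (hi n k) = signedPerm 1 (Pi.single k 1) := by
  refine perm_ext_pairEquiv fun j b => ?_
  rw [← pairEquiv_zero, ← pairEquiv_one, (pairEquiv n).injective.swap_apply, signedPerm_pairEquiv]
  congr 1
  by_cases hj : j = k
  · subst hj; fin_cases b <;> simp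
  · simp [Equiv.swap_apply_of_ne_of_ne, hj]

theorem swap_lo_mul_swap_hi {i j : Fin n} (hij : i ≠ j) :
    Equiv.swap (lo n i) (lo n j) * Equiv.swap (hi n i) (hi n j) =
      signedPerm (Equiv.swap i j) 0 := by
  refine perm_ext_pairEquiv fun k b => ?_
  simp only [← pairEquiv_zero, ← pairEquiv_one, Equiv.Perm.mul_apply,
    (pairEquiv n).injective.swap_apply, signedPerm_pairEquiv]
  congr 1
  fin_cases b <;> simp [Equiv.swap_apply_def] <;> split_ifs <;> simp_all

theorem signedPerm_mem_of_generator {g : Equiv.Perm (Fin (2 * n))}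
    (hg : g ∈ {g | ∃ k : Fin n, g = Equiv.swap (lo n k) (hi n k)} ∪
      {g | ∃ i j : Fin n, i < j ∧
        g = Equiv.swap (lo n i) (lo n j) * Equiv.swap (hi n i) (hi n j)}) :
    g ∈ Set.range fun p : Equiv.Perm (Fin n) × (Fin n → Fin 2) => signedPerm p.1 p.2 := by
  rcases hg with ⟨k, rfl⟩ | ⟨i, j, hij, rfl⟩
  · exact ⟨(1, Pi.single k 1), (swap_lo_hi k).symm⟩
  · exact ⟨(Equiv.swap i j, 0), (swap_lo_mul_swap_hi hij.ne).symm⟩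

theorem signedPerm_one_mem (s : Fin n → Fin 2) : signedPerm 1 s ∈ hyperoctahedral n := by
  induction s using Pi.single_induction with
  | zero => rw [signedPerm_one_zero]; exact one_mem _
  | add s t hs ht =>
    have h : signedPerm 1 (s + t) = signedPerm 1 s * signedPerm 1 t := by
      rw [signedPerm_mul]; simp [add_comm]
    exact h ▸ mul_mem hs ht
  | single k b =>
    fin_cases b
    · simp [signedPerm_one_zero, one_mem]
    · exact swap_lo_hi k ▸ Subgroup.subset_closure (Or.inl ⟨k, rfl⟩)

theorem signedPerm_zero_mem (π : Equiv.Perm (Fin n)) : signedPerm π 0 ∈ hyperoctahedral n := by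
  induction π using Equiv.Perm.swap_induction_on with
  | one => rw [signedPerm_one_zero]; exact one_mem _
  | swap_mul π i j hij hπ =>
    have h : signedPerm (Equiv.swap i j * π) 0 =
        signedPerm (Equiv.swap i j) 0 * signedPerm π 0 := by
      rw [signedPerm_mul]; simp
    rw [h]
    refine mul_mem (Subgroup.subset_closure (Or.inr ?_)) hπ
    rcases hij.lt_or_gt with hlt | hgt
    · exact ⟨i, j, hlt, (swap_lo_mul_swap_hi hij).symm⟩
    · exact ⟨j, i, hgt, by rw [Equiv.swap_comm i j, swap_lo_mul_swap_hi hij.symm]⟩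

theorem coe_hyperoctahedral :
    (hyperoctahedral n : Set (Equiv.Perm (Fin (2 * n)))) =
      Set.range fun p : Equiv.Perm (Fin n) × (Fin n → Fin 2) => signedPerm p.1 p.2 := by
  refine subset_antisymm (fun g hg => ?_) ?_
  · rw [SetLike.mem_coe, hyperoctahedral] at hg
    induction hg using Subgroup.closure_induction with
    | mem g hg => exact signedPerm_mem_of_generator hg
    | one => exact ⟨(1, 0), signedPerm_one_zero⟩
    | mul g h _ _ hg hh =>
      obtain ⟨⟨π, s⟩, rfl⟩ := hg
      obtain ⟨⟨ρ, t⟩, rfl⟩ := hh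
      exact ⟨(π * ρ, t + s ∘ ρ), (signedPerm_mul π ρ s t).symm⟩
    | inv g _ hg =>
      obtain ⟨⟨π, s⟩, rfl⟩ := hg
      exact ⟨(π⁻¹, -(s ∘ ⇑π⁻¹)), (signedPerm_inv π s).symm⟩
  · rintro _ ⟨⟨π, s⟩, rfl⟩
    have h : signedPerm π s = signedPerm π 0 * signedPerm 1 s := by
      rw [signedPerm_mul]; simp
    show signedPerm π s ∈ hyperoctahedral n
    rw [h]
    exact mul_mem (signedPerm_zero_mem π) (signedPerm_one_mem s)

end Hyperoctahedral

theorem card_hyperoctahedral (n : ℕ) : Nat.card (hyperoctahedral n) = 2 ^ n * n.factorial := by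
  rw [← SetLike.coe_sort_coe, Hyperoctahedral.coe_hyperoctahedral,
    Nat.card_range_of_injective Hyperoctahedral.signedPerm_injective]
  simp [Nat.card_eq_fintype_card, Fintype.card_perm, mul_comm]

theorem Nat.Partition.card_parts_indiscrete_le_one (n : ℕ) :
    Multiset.card (Nat.Partition.indiscrete n).parts ≤ 1 :=
  (Multiset.card_le_card (Multiset.filter_le _ _)).trans_eq (Multiset.card_singleton n)

theorem Nat.Partition.eq_indiscrete_of_card_parts_le_one {n : ℕ} (μ : Nat.Partition n)
    (hμ : Multiset.card μ.parts ≤ 1) : μ = Nat.Partition.indiscrete n := by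
  rcases Nat.eq_zero_or_pos n with rfl | hn
  · exact Subsingleton.elim _ _
  obtain ⟨a, ha⟩ : ∃ a, μ.parts = {a} := by
    refine Multiset.card_eq_one.mp (hμ.antisymm (Multiset.card_pos.mpr fun h => ?_))
    exact hn.ne' (by simpa [h] using μ.parts_sum.symm)
  have : a = n := by simpa [ha] using μ.parts_sum
  ext1
  rw [ha, this, Nat.Partition.indiscrete_parts hn.ne']

theorem card_parts_doublePartition {n : ℕ} (μ : Nat.Partition n) :
    Multiset.card (doublePartition μ).parts = Multiset.card μ.parts :=
  Multiset.card_map _ _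

theorem Cprime_indiscrete (n : ℕ) (z : ℂ) :
    Cprime (Nat.Partition.indiscrete n) z = ∏ k ∈ range n, (z + 2 * k) := by
  rcases Nat.eq_zero_or_pos n with rfl | hn
  · simp [Cprime, sortedParts]
  · simp [Cprime, sortedParts, Nat.Partition.indiscrete_parts hn.ne']

theorem sum_conv {m : ℕ} (f g : Equiv.Perm (Fin m) → ℂ) :
    ∑ σ, conv f g σ = (∑ σ, f σ) * ∑ τ, g τ := by
  unfold conv
  rw [sum_comm, mul_sum]
  refine sum_congr rfl fun τ _ => ?_
  rw [← sum_mul, ← Equiv.sum_comp (Equiv.mulRight τ⁻¹) f]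
  rfl

theorem sum_eH (n : ℕ) : ∑ σ, eH n σ = 1 := by
  unfold eH
  have hcard : #{σ | σ ∈ hyperoctahedral n} = 2 ^ n * n.factorial := by
    rw [← Fintype.card_subtype, ← Nat.card_eq_fintype_card]
    exact card_hyperoctahedral n
  rw [sum_ite, sum_const_zero, add_zero, sum_const, nsmul_eq_mul, hcard]
  push_cast
  exact mul_inv_cancel₀ (by simp [Nat.factorial_ne_zero])

theorem sum_omegaSph {n : ℕ} (lam : Nat.Partition n) :
    ∑ σ, omegaSph lam σ = ∑ σ, (charOfPartition (doublePartition lam) σ : ℂ) := by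
  rw [omegaSph, sum_conv, sum_eH, mul_one]

theorem sum_omegaSph_eq_zero {n : ℕ} {lam : Nat.Partition n}
    (hlam : lam ≠ Nat.Partition.indiscrete n) : ∑ σ, omegaSph lam σ = 0 := by
  have hlen : 2 ≤ (sortedParts (doublePartition lam)).length := by
    by_contra! h
    rw [length_sortedParts, card_parts_doublePartition] at h
    exact hlam (lam.eq_indiscrete_of_card_parts_le_one (by omega))
  rw [sum_omegaSph, ← Int.cast_sum, sum_charOfPartition_eq_zero _ hlen, Int.cast_zero]

theorem charOfPartition_doublePartition_indiscrete (n : ℕ) (π : Equiv.Perm (Fin (2 * n))) :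
    charOfPartition (doublePartition (Nat.Partition.indiscrete n)) π = 1 :=
  charOfPartition_eq_one _ (by
    rw [length_sortedParts, card_parts_doublePartition]
    exact Nat.Partition.card_parts_indiscrete_le_one n) π

theorem stmt9_general (n : ℕ) (z : ℂ) :
    ∑ σ : Equiv.Perm (Fin (2*n)), WgO n z σ =
      (2^n * n.factorial : ℂ) / ∏ k ∈ Finset.range n, (z + 2*k) := by
  have hsum_indiscrete : ∑ σ, omegaSph (Nat.Partition.indiscrete n) σ = (2 * n).factorial := by
    simp [sum_omegaSph, charOfPartition_doublePartition_indiscrete, Fintype.card_perm]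
  calc ∑ σ, WgO n z σ
      = (2 ^ n * n.factorial : ℂ) / (2 * n).factorial * ∑ lam : Nat.Partition n,
          (charOfPartition (doublePartition lam) 1 : ℂ) / Cprime lam z * ∑ σ, omegaSph lam σ := by
        simp only [WgO, mul_sum]
        exact sum_comm
    _ = (2 ^ n * n.factorial : ℂ) / (2 * n).factorial *
          ((1 / ∏ k ∈ range n, (z + 2 * k)) * (2 * n).factorial) := by
        rw [sum_eq_single (Nat.Partition.indiscrete n)
          (fun lam _ hlam => by rw [sum_omegaSph_eq_zero hlam, mul_zero]) (by simp),
          charOfPartition_doublePartition_indiscrete, Cprime_indiscrete, hsum_indiscrete,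
          Int.cast_one]
    _ = (2 ^ n * n.factorial : ℂ) / ∏ k ∈ range n, (z + 2 * k) := by
        have : ((2 * n).factorial : ℂ) ≠ 0 := Nat.cast_ne_zero.mpr (Nat.factorial_ne_zero _)
        field_simp

/-- `∑_{σ ∈ S_{2n}} Wg^O_n(σ; z) = 2^n n! / (z (z+2) ⋯ (z+2(n-1)))` for `z` avoiding
the poles `0, -2, …, -2(n-1)`. -/
theorem stmt9 (n : ℕ) (hn : 1 ≤ n) (z : ℂ) (hz : ∀ k : ℕ, k < n → z ≠ -(2*k)) :
    ∑ σ : Equiv.Perm (Fin (2*n)), WgO n z σ =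
      (2^n * n.factorial : ℂ) / ∏ k ∈ Finset.range n, (z + 2*k) :=
  stmt9_general n z
end
end

section
/- Let $n \ge 1$ and let $N$ be an indeterminate (or a real number avoiding poles). For $0 \le r \le \lfloor n/2 \rfloor$, define $A_r = \frac{2n-4r+1}{(2r)!!\,(2n-2r+1)!!} \prod_{j=1}^{n-r}\frac{1}{N+2j-1} \prod_{j=0}^{r-1}\frac{1}{N+2j}$. Then for each $0 \le k \le \lfloor n/2 \rfloor$, $A_0 + A_1 + \cdots + A_k = \frac{1}{(2k)!!\,(2(n-k)-1)!!} \cdot \frac{1}{N+2n-1} \prod_{j=1}^{n-k-1}\frac{1}{N+2j-1} \prod_{j=0}^{k-1}\frac{1}{N+2j}$. -/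
/-!
Write `n = 2k + 2 + d` and `u = N + 2k`, `w = N + 2k + 2d + 1`, `c = N + 2n - 1`. After cancelling
double factorials, the closed forms `S_{k+1}`, `S_k` of the partial sums and the term `A_{k+1}` are one
common factor times `(c - u)/(uc)`, `(c - w)/(wc)` and `(w - u)/(uw)`, i.e. times `u⁻¹ - c⁻¹`,
`w⁻¹ - c⁻¹` and `u⁻¹ - w⁻¹`. So `S_{k+1} = S_k + A_{k+1}`, and the claim follows by induction on `k`
from `S_0 = A_0`.
-/

noncomputable section

open Finset

/-- `A_r = ((2n-4r+1)/((2r)‼ (2n-2r+1)‼)) ∏_{j=1}^{n-r} 1/(N+2j-1) ∏_{j=0}^{r-1} 1/(N+2j)`. -/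
def Aterm (n : ℕ) (N : ℝ) (r : ℕ) : ℝ :=
  ((2*n - 4*r + 1 : ℕ) : ℝ) /
      ((Nat.doubleFactorial (2*r) : ℝ) * (Nat.doubleFactorial (2*n - 2*r + 1) : ℝ)) *
    (∏ j ∈ range (n - r), (N + (2*j+1 : ℕ))⁻¹) *
    (∏ j ∈ range r, (N + (2*j : ℕ))⁻¹)

def AsumClosed (n : ℕ) (N : ℝ) (k : ℕ) : ℝ :=
  ((Nat.doubleFactorial (2*k) : ℝ) * (Nat.doubleFactorial (2*(n-k) - 1) : ℝ))⁻¹ *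
    (N + (2*n - 1 : ℕ))⁻¹ *
    (∏ j ∈ range (n - k - 1), (N + (2*j+1 : ℕ))⁻¹) *
    (∏ j ∈ range k, (N + (2*j : ℕ))⁻¹)

lemma doubleFactorial_add_two_cast {R : Type*} [Semiring R] (m : ℕ) :
    ((m + 2).doubleFactorial : R) = (m + 2 : ℕ) * (m.doubleFactorial : R) := by
  rw [Nat.doubleFactorial_add_two, Nat.cast_mul]

lemma AsumClosed_zero (m : ℕ) (N : ℝ) : AsumClosed (m + 1) N 0 = Aterm (m + 1) N 0 := by
  have hodd : ((2*m + 3 : ℕ) : ℝ) ≠ 0 := by positivity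
  simp only [AsumClosed, Aterm, Nat.sub_zero, mul_zero, Nat.add_sub_cancel, prod_range_zero,
    mul_one, Nat.doubleFactorial, Nat.cast_one, one_mul, prod_range_succ]
  rw [show 2 * (m + 1) - 1 = 2 * m + 1 by omega, show 2 * (m + 1) + 1 = 2 * m + 1 + 2 by omega,
    doubleFactorial_add_two_cast, show 2 * m + 1 + 2 = 2 * m + 3 by omega,
    div_mul_cancel_left₀ hodd]
  ring

def stepFactor (N : ℝ) (k d : ℕ) : ℝ :=
  ((Nat.doubleFactorial (2*k + 2) : ℝ) * (Nat.doubleFactorial (2*k + 2*d + 3) : ℝ))⁻¹ *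
    (∏ j ∈ range (k + d), (N + (2*j+1 : ℕ))⁻¹) * (∏ j ∈ range k, (N + (2*j : ℕ))⁻¹)

section Step

variable (N : ℝ) (k d : ℕ)

lemma AsumClosed_succ_eq (hu : N + (2*k : ℕ) ≠ 0) (hc : N + (4*k + 2*d + 3 : ℕ) ≠ 0) :
    AsumClosed (2*k + 2 + d) N (k + 1) =
      stepFactor N k d * ((N + (2*k : ℕ))⁻¹ - (N + (4*k + 2*d + 3 : ℕ))⁻¹) := by
  have hgap : N + (4*k + 2*d + 3 : ℕ) - (N + (2*k : ℕ)) = (2*k + 2*d + 1 + 2 : ℕ) := by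
    push_cast; ring
  rw [inv_sub_inv' hu hc, hgap, AsumClosed, stepFactor,
    show 2 * (2*k + 2 + d) - 1 = 4*k + 2*d + 3 by omega,
    show 2 * (2*k + 2 + d - (k + 1)) - 1 = 2*k + 2*d + 1 by omega,
    show 2*k + 2 + d - (k + 1) - 1 = k + d by omega,
    show 2*k + 2*d + 3 = 2*k + 2*d + 1 + 2 by omega, doubleFactorial_add_two_cast (2*k + 2*d + 1),
    show 2 * (k + 1) = 2*k + 2 by ring, prod_range_succ _ k]
  field_simp

lemma AsumClosed_eq (hw : N + (2*k + 2*d + 1 : ℕ) ≠ 0) (hc : N + (4*k + 2*d + 3 : ℕ) ≠ 0) :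
    AsumClosed (2*k + 2 + d) N k =
      stepFactor N k d * ((N + (2*k + 2*d + 1 : ℕ))⁻¹ - (N + (4*k + 2*d + 3 : ℕ))⁻¹) := by
  have hgap : N + (4*k + 2*d + 3 : ℕ) - (N + (2*k + 2*d + 1 : ℕ)) = (2*k + 2 : ℕ) := by
    push_cast; ring
  rw [inv_sub_inv' hw hc, hgap, AsumClosed, stepFactor,
    show 2 * (2*k + 2 + d) - 1 = 4*k + 2*d + 3 by omega,
    show 2 * (2*k + 2 + d - k) - 1 = 2*k + 2*d + 3 by omega,
    show 2*k + 2 + d - k - 1 = k + d + 1 by omega, doubleFactorial_add_two_cast (2*k),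
    prod_range_succ _ (k + d), show 2 * (k + d) + 1 = 2*k + 2*d + 1 by ring]
  field_simp

lemma Aterm_succ_eq (hu : N + (2*k : ℕ) ≠ 0) (hw : N + (2*k + 2*d + 1 : ℕ) ≠ 0) :
    Aterm (2*k + 2 + d) N (k + 1) =
      stepFactor N k d * ((N + (2*k : ℕ))⁻¹ - (N + (2*k + 2*d + 1 : ℕ))⁻¹) := by
  have hgap : N + (2*k + 2*d + 1 : ℕ) - (N + (2*k : ℕ)) = (2*d + 1 : ℕ) := by
    push_cast; ring
  rw [inv_sub_inv' hu hw, hgap, Aterm, stepFactor,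
    show 2 * (2*k + 2 + d) - 4 * (k + 1) + 1 = 2*d + 1 by omega,
    show 2 * (2*k + 2 + d) - 2 * (k + 1) + 1 = 2*k + 2*d + 3 by omega,
    show 2*k + 2 + d - (k + 1) = k + d + 1 by omega, show 2 * (k + 1) = 2*k + 2 by ring,
    prod_range_succ _ (k + d), prod_range_succ _ k, show 2 * (k + d) + 1 = 2*k + 2*d + 1 by ring]
  ring

end Step

lemma AsumClosed_succ (n : ℕ) (N : ℝ) (hN : ∀ t : ℕ, t ≤ 2*n - 1 → N + (t : ℝ) ≠ 0) (k : ℕ)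
    (hk : 2 * (k + 1) ≤ n) :
    AsumClosed n N (k + 1) = AsumClosed n N k + Aterm n N (k + 1) := by
  obtain ⟨d, rfl⟩ : ∃ d, n = 2*k + 2 + d := ⟨n - (2*k + 2), by omega⟩
  rw [AsumClosed_succ_eq N k d (hN _ (by omega)) (hN _ (by omega)),
    AsumClosed_eq N k d (hN _ (by omega)) (hN _ (by omega)),
    Aterm_succ_eq N k d (hN _ (by omega)) (hN _ (by omega))]
  ring

/-- For `0 ≤ k ≤ ⌊n/2⌋`,
`A_0 + ⋯ + A_k = (1/((2k)‼ (2(n-k)-1)‼)) (1/(N+2n-1)) ∏_{j=1}^{n-k-1} 1/(N+2j-1)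
∏_{j=0}^{k-1} 1/(N+2j)`, for real `N` avoiding the poles. -/
theorem stmt11 (n : ℕ) (hn : 1 ≤ n) (N : ℝ)
    (hN : ∀ t : ℕ, t ≤ 2*n - 1 → N + (t : ℝ) ≠ 0)
    (k : ℕ) (hk : k ≤ n / 2) :
    ∑ r ∈ range (k+1), Aterm n N r =
      ((Nat.doubleFactorial (2*k) : ℝ) * (Nat.doubleFactorial (2*(n-k) - 1) : ℝ))⁻¹ *
        (N + (2*n - 1 : ℕ))⁻¹ *
        (∏ j ∈ range (n - k - 1), (N + (2*j+1 : ℕ))⁻¹) *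
        (∏ j ∈ range k, (N + (2*j : ℕ))⁻¹) := by
  change _ = AsumClosed n N k
  induction k with
  | zero =>
    obtain ⟨m, rfl⟩ : ∃ m, n = m + 1 := ⟨n - 1, by omega⟩
    rw [sum_range_one, AsumClosed_zero]
  | succ k ih =>
    rw [sum_range_succ, ih (by omega), AsumClosed_succ n N hN k (by omega)]
end
end
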